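/- Let (F_i)_{i∈ω} be an irreducible sequence of finite rooted transitive frames. Then the map I ↦ Log({F_i : i ∈ I}) is injective on subsets of ω; consequently there is a continuum of normal modal logics extending Log({F_i}_{i∈ω}). -/

import Mathlib

/-- A Kripke frame: a set of worlds with a binary relation. -/
structure Frame where
  World : Type
  rel : World → World → Prop

/-- `f` is a reduction (surjective p-morphism) of `F` to `G`. -/
def Reduction (F G : Frame) (f : F.World → G.World) : Prop :=
  Function.Surjective f ∧
  (∀ w u, F.rel w u → G.rel (f w) (f u)) ∧
  (∀ w v, G.rel (f w) v → ∃ u, F.rel w u ∧ f u = v)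

/-- `F` is reducible to `G`. -/
def Reducible (F G : Frame) : Prop := ∃ f, Reduction F G f

/-- The subframe of `F` generated by the point `w`. -/
def Frame.genSub (F : Frame) (w : F.World) : Frame :=
  ⟨{v // Relation.ReflTransGen F.rel w v}, fun a b => F.rel a.1 b.1⟩

/-- Modal formulas over countably many propositional variables. -/
inductive Formula where
  | var : ℕ → Formula
  | bot : Formula
  | imp : Formula → Formula → Formula
  | box : Formula → Formula
deriving DecidableEq

namespace Formula

def neg (a : Formula) : Formula := .imp a .bot
def top : Formula := .imp .bot .bot
def and (a b : Formula) : Formula := neg (.imp a (neg b))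
def or (a b : Formula) : Formula := .imp (neg a) b
def dia (a : Formula) : Formula := neg (.box (neg a))

/-- Finite conjunction of a list of formulas. -/
def bigConj (l : List Formula) : Formula := l.foldr and top

/-- Finite disjunction of a list of formulas. -/
def bigDisj (l : List Formula) : Formula := l.foldr or .bot

end Formula

/-- Kripke satisfaction of a formula at a world of `F` under valuation `V`. -/
def Sat (F : Frame) (V : ℕ → F.World → Prop) : F.World → Formula → Prop
  | w, .var n => V n w
  | _, .bot => False
  | w, .imp a b => Sat F V w a → Sat F V w b
  | w, .box a => ∀ u, F.rel w u → Sat F V u a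

/-- `φ` is valid at the point `w` of `F` (true under all valuations). -/
def SatAll (F : Frame) (w : F.World) (φ : Formula) : Prop := ∀ V, Sat F V w φ

/-- `φ` is valid in the frame `F`. -/
def Valid (F : Frame) (φ : Formula) : Prop := ∀ V w, Sat F V w φ

/-- The logic of the subfamily `{F i : i ∈ I}` of a family of frames. -/
def LogOf (F : ℕ → Frame) (I : Set ℕ) : Set Formula := {φ | ∀ i ∈ I, Valid (F i) φ}

/-! The Jankov–Fine formula `δ` of a finite rooted frame `G` names each world of `G` by a
variable and says, at a point and at all its successors, that exactly one name holds and that a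
point named `a` sees a point named `b` iff `a` sees `b` in `G`. In a transitive frame, a point
satisfying `δ` therefore turns naming into a reduction of the subframe it generates onto `G`,
while `G` satisfies `δ` at its root when each world carries its own name. Hence for an
irreducible sequence `¬δᵢ ∈ Log {F j : j ∈ I}` exactly when `i ∉ I`. -/

open Formula

namespace Formula

noncomputable def iConj {α : Type} [Fintype α] (φ : α → Formula) : Formula :=
  bigConj ((Finset.univ : Finset α).toList.map φ)

noncomputable def iDisj {α : Type} [Fintype α] (φ : α → Formula) : Formula :=
  bigDisj ((Finset.univ : Finset α).toList.map φ)

end Formula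

section Semantics

variable {F : Frame} {V : ℕ → F.World → Prop} {w : F.World}

@[simp]
lemma sat_neg {a : Formula} : Sat F V w (neg a) ↔ ¬ Sat F V w a := Iff.rfl

@[simp]
lemma sat_top : Sat F V w top := id

@[simp]
lemma sat_and {a b : Formula} : Sat F V w (a.and b) ↔ Sat F V w a ∧ Sat F V w b := by
  simp only [Formula.and, sat_neg, Sat]
  tauto

@[simp]
lemma sat_or {a b : Formula} : Sat F V w (a.or b) ↔ Sat F V w a ∨ Sat F V w b := by
  simp only [Formula.or, sat_neg, Sat]
  tauto

@[simp]
lemma sat_dia {a : Formula} : Sat F V w (dia a) ↔ ∃ u, F.rel w u ∧ Sat F V u a := by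
  simp [Formula.dia, Sat]

@[simp]
lemma sat_bigConj {l : List Formula} : Sat F V w (bigConj l) ↔ ∀ φ ∈ l, Sat F V w φ := by
  induction l with
  | nil => simp [bigConj]
  | cons a l ih => simp_all [bigConj]

@[simp]
lemma sat_bigDisj {l : List Formula} : Sat F V w (bigDisj l) ↔ ∃ φ ∈ l, Sat F V w φ := by
  induction l with
  | nil => simp [bigDisj, Sat]
  | cons a l ih => simp_all [bigDisj]

@[simp]
lemma sat_iConj {α : Type} [Fintype α] {φ : α → Formula} :
    Sat F V w (iConj φ) ↔ ∀ a, Sat F V w (φ a) := by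
  simp [iConj]

@[simp]
lemma sat_iDisj {α : Type} [Fintype α] {φ : α → Formula} :
    Sat F V w (iDisj φ) ↔ ∃ a, Sat F V w (φ a) := by
  simp [iDisj]

end Semantics

lemma eq_or_rel_of_reflTransGen {α : Type} {r : α → α → Prop}
    (htr : ∀ a b c, r a b → r b c → r a c) {w v : α} (h : Relation.ReflTransGen r w v) :
    v = w ∨ r w v := by
  have : IsTrans α r := ⟨htr⟩
  rwa [Relation.reflTransGen_iff_eq_or_transGen, Relation.transGen_eq_self] at h

namespace JankovFine

open Classical

variable (G : Frame) [Fintype G.World]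

noncomputable def name (a : G.World) : ℕ := Fintype.equivFin G.World a

lemma name_injective : Function.Injective (name G) :=
  Fin.val_injective.comp (Fintype.equivFin G.World).injective

noncomputable def atom (a : G.World) : Formula := .var (name G a)

noncomputable def pairClause (a b : G.World) : Formula :=
  Formula.and (if a = b then top else neg (atom G b))
    (if G.rel a b then dia (atom G b) else neg (dia (atom G b)))

noncomputable def diagram : Formula :=
  Formula.and (iDisj (atom G)) (iConj fun a => iConj fun b => .imp (atom G a) (pairClause G a b))

noncomputable def formula (r : G.World) : Formula :=
  Formula.and (atom G r) (Formula.and (diagram G) (.box (diagram G)))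

variable {G}

lemma sat_diagram {H : Frame} {V : ℕ → H.World → Prop} {x : H.World} :
    Sat H V x (diagram G) ↔ (∃ a, V (name G a) x) ∧ ∀ a b, V (name G a) x →
      (a ≠ b → ¬ V (name G b) x) ∧ (G.rel a b ↔ ∃ y, H.rel x y ∧ V (name G b) y) := by
  simp only [diagram, sat_and, sat_iDisj, sat_iConj]
  refine and_congr Iff.rfl (forall₂_congr fun a b => imp_congr_right fun _ => ?_)
  unfold pairClause
  split_ifs <;> simp_all [atom, Sat]

lemma not_valid_neg_formula (r : G.World) : ¬ Valid G (neg (formula G r)) := by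
  intro h
  refine h (fun n x => name G x = n) r ?_
  have hdiag : ∀ x, Sat G (fun n x => name G x = n) x (diagram G) := by
    intro x
    simp only [sat_diagram, (name_injective G).eq_iff]
    refine ⟨⟨x, rfl⟩, ?_⟩
    rintro a b rfl
    exact ⟨id, fun hrel => ⟨b, hrel, rfl⟩, fun ⟨_, hy, rfl⟩ => hy⟩
  exact sat_and.2 ⟨rfl, sat_and.2 ⟨hdiag r, fun x _ => hdiag x⟩⟩

lemma reducible_genSub_of_sat_formula {H : Frame}
    (htr : ∀ a b c, H.rel a b → H.rel b c → H.rel a c) {r : G.World}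
    (hroot : ∀ u, u = r ∨ G.rel r u) {V : ℕ → H.World → Prop} {w : H.World}
    (h : Sat H V w (formula G r)) : Reducible (H.genSub w) G := by
  simp only [formula, sat_and] at h
  obtain ⟨hr, hw, hbox⟩ := h
  have hdiag (y : (H.genSub w).World) := sat_diagram.1 <|
    (eq_or_rel_of_reflTransGen htr y.2).elim (fun hy => by rwa [hy]) (hbox _)
  choose f hf using fun y => (hdiag y).1
  have hclause y b := (hdiag y).2 (f y) b (hf y)
  have hname : ∀ y b, V (name G b) y.1 → f y = b :=
    fun y b hb => by_contra fun hne => (hclause y b).1 hne hb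
  have hback : ∀ y v, G.rel (f y) v → ∃ u, (H.genSub w).rel y u ∧ f u = v := by
    intro y v hv
    obtain ⟨z, hyz, hz⟩ := (hclause y v).2.1 hv
    exact ⟨⟨z, y.2.tail hyz⟩, hyz, hname _ _ hz⟩
  have hfw : f ⟨w, .refl⟩ = r := hname _ _ hr
  refine ⟨f, fun v => ?_, fun y z hyz => (hclause y (f z)).2.2 ⟨z.1, hyz, hf z⟩, hback⟩
  rcases hroot v with rfl | hv
  · exact ⟨_, hfw⟩
  · obtain ⟨u, -, hu⟩ := hback _ v (hfw ▸ hv)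
    exact ⟨u, hu⟩

lemma valid_neg_formula {H : Frame} (htr : ∀ a b c, H.rel a b → H.rel b c → H.rel a c)
    {r : G.World} (hroot : ∀ u, u = r ∨ G.rel r u) (hirr : ∀ w, ¬ Reducible (H.genSub w) G) :
    Valid H (neg (formula G r)) :=
  fun _ w h => hirr w (reducible_genSub_of_sat_formula htr hroot h)

end JankovFine

section Logics

variable {F : ℕ → Frame}

lemma logOf_anti {I J : Set ℕ} (h : I ⊆ J) : LogOf F J ⊆ LogOf F I :=
  fun _ hφ i hi => hφ i (h hi)

lemma logOf_injective (χ : ℕ → Formula) (hfail : ∀ i, ¬ Valid (F i) (χ i))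
    (hvalid : ∀ i j, i ≠ j → Valid (F j) (χ i)) : Function.Injective (LogOf F) := by
  have hmem (I : Set ℕ) (i : ℕ) : χ i ∈ LogOf F I ↔ i ∉ I :=
    ⟨fun hχ hi => hfail i (hχ i hi),
      fun hi j hj => hvalid i j (ne_of_mem_of_not_mem hj hi).symm⟩
  intro I J h
  ext i
  exact not_iff_not.1 ((hmem I i).symm.trans (h ▸ hmem J i))

lemma continuum_le_mk_logOf (h : Function.Injective (LogOf F)) :
    Cardinal.continuum ≤
      Cardinal.mk {L : Set Formula // LogOf F Set.univ ⊆ L ∧ ∃ I : Set ℕ, L = LogOf F I} :=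
  calc Cardinal.continuum = Cardinal.mk (Set ℕ) := by
        rw [Cardinal.mk_set, Cardinal.mk_nat, Cardinal.two_power_aleph0]
    _ ≤ _ := Cardinal.mk_le_of_injective
        (f := fun I => ⟨LogOf F I, logOf_anti I.subset_univ, I, rfl⟩)
        fun _ _ hIJ => h (congrArg Subtype.val hIJ)

end Logics

/-- If `(F i)` is an irreducible sequence of finite rooted transitive frames,
then `I ↦ Log({F i : i ∈ I})` is injective on subsets of `ω`, and consequently
there is a continuum of logics of subfamilies, all extending
`Log({F i : i ∈ ω})`. -/
theorem irreducible_seq_continuum (F : ℕ → Frame)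
    (hfin : ∀ i, Finite (F i).World)
    (htr : ∀ i, ∀ a b c, (F i).rel a b → (F i).rel b c → (F i).rel a c)
    (hroot : ∀ i, ∃ w : (F i).World, ∀ u, u = w ∨ (F i).rel w u)
    (hirr : ∀ i j : ℕ, i ≠ j → ∀ w : (F j).World, ¬ Reducible ((F j).genSub w) (F i)) :
    Function.Injective (fun I : Set ℕ => LogOf F I) ∧
    Cardinal.continuum ≤
      Cardinal.mk {L : Set Formula // LogOf F Set.univ ⊆ L ∧ ∃ I : Set ℕ, L = LogOf F I} := by
  have (i : ℕ) : Fintype (F i).World := Fintype.ofFinite _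
  choose r hr using hroot
  have hinj : Function.Injective (LogOf F) :=
    logOf_injective (fun i => neg (JankovFine.formula (F i) (r i)))
      (fun i => JankovFine.not_valid_neg_formula (r i))
      (fun i j hij => JankovFine.valid_neg_formula (htr j) (hr i) (hirr i j hij))
  exact ⟨hinj, continuum_le_mk_logOf hinj⟩
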